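/- arXiv:2509.12687 — 5 statements merged into one kernel-verified Lean document; each statement's English description precedes it below -/
import Mathlib

section
/- Let p be an odd prime and let G be a finite group that is a 𝒫₀(p)-group with respect to a pair (ρ,τ). Then G = ⟨[ρ,τ], ρ⟩, the subgroup generated by the commutator [ρ,τ] and ρ. -/
open Pointwise

/-- A group is cyclic or dihedral. -/
def IsCyclicOrDihedral (H : Type*) [Group H] : Prop :=
  IsCyclic H ∨ ∃ n : ℕ, 0 < n ∧ Nonempty (H ≃* DihedralGroup n)

/-- `G` is a `𝒫₀(p)`-group with respect to `(ρ, τ)`. -/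
def IsP0 (p : ℕ) {G : Type*} [Group G] (ρ τ : G) : Prop :=
  orderOf τ = 2 ∧ Subgroup.closure {ρ, τ} = ⊤ ∧
    ∃ n : ℕ, 0 < n ∧
      Nat.card G / orderOf ρ +
          Nat.card G / Nat.card (Subgroup.closure {τ, ρ⁻¹ * τ * ρ} : Subgroup G) +
          p ^ n =
        Nat.card G / 2

/-- `G` is a `𝒫₁(p)`-group with respect to subgroups `H₁` and `H₂`. -/
def IsP1With (p : ℕ) {G : Type*} [Group G] (H₁ H₂ : Subgroup G) : Prop :=
  IsCyclicOrDihedral H₁ ∧ IsCyclicOrDihedral H₂ ∧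
    ∃ n : ℕ, Nat.card G = p ^ n * Nat.lcm (Nat.card H₁) (Nat.card H₂)

/-- `G` is a `𝒫₁(p)`-group. -/
def IsP1 (p : ℕ) (G : Type*) [Group G] : Prop :=
  ∃ H₁ H₂ : Subgroup G, IsP1With p H₁ H₂

/-- `G` is a `𝒫₁⁺(p)`-group with respect to `(ρ, τ)`. -/
def IsP1Plus (p : ℕ) {G : Type*} [Group G] (ρ τ : G) : Prop :=
  orderOf τ ≤ 2 ∧ Subgroup.closure {ρ, τ} = ⊤ ∧
    (Odd p → Subgroup.closure {ρ⁻¹ * τ⁻¹ * ρ * τ, ρ} = ⊤) ∧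
    IsP1With p (Subgroup.closure {τ, ρ⁻¹ * τ * ρ}) (Subgroup.zpowers ρ)

/-- `G` is a `𝒫₂(p)`-group. -/
def IsP2 (p : ℕ) (G : Type*) [Group G] : Prop :=
  ∀ r : ℕ, r.Prime → r ≠ p → ∀ S : Sylow r G, IsCyclicOrDihedral (S : Subgroup G)

/-- `G` is a `𝒫₂⁺(p)`-group with respect to `(ρ, τ)`. -/
def IsP2Plus (p : ℕ) {G : Type*} [Group G] (ρ τ : G) : Prop :=
  orderOf τ ≤ 2 ∧ Subgroup.closure {ρ, τ} = ⊤ ∧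
    (Odd p → Subgroup.closure {ρ⁻¹ * τ⁻¹ * ρ * τ, ρ} = ⊤) ∧
    IsP2 p G

/-- A Hall `{2,3}`-subgroup. -/
def IsHall23 {G : Type*} [Group G] (H : Subgroup G) : Prop :=
  (∃ i j : ℕ, Nat.card H = 2 ^ i * 3 ^ j) ∧ Nat.Coprime H.index 6

/-- A Hall `{2,3}'`-subgroup. -/
def IsHall23' {G : Type*} [Group G] (K : Subgroup G) : Prop :=
  Nat.Coprime (Nat.card K) 6 ∧ ∃ i j : ℕ, K.index = 2 ^ i * 3 ^ j

/-- The projective special linear group of degree 2 over `R`. -/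
abbrev ProjSL2 (R : Type*) [CommRing R] : Type _ :=
  Matrix.SpecialLinearGroup (Fin 2) R ⧸
    Subgroup.center (Matrix.SpecialLinearGroup (Fin 2) R)

/-- The projective general linear group of degree 2 over `R`. -/
abbrev ProjGL2 (R : Type*) [CommRing R] : Type _ :=
  Matrix.GeneralLinearGroup (Fin 2) R ⧸
    Subgroup.center (Matrix.GeneralLinearGroup (Fin 2) R)

/-!
Let `c = [ρ, τ]` and `H = ⟨c, ρ⟩ = ⟨ρ, ρ^τ⟩`. As `τ` is an involution, conjugation by `τ` swaps
these two generators, so `H` is normal of index at most 2; suppose the index is 2. Read modulo 2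
(with `p ^ n` odd), the defining equation and the bound `|⟨τ, τ^ρ⟩| ≤ 2 |c|` for this dihedral
group force `|c|` to be even and `[H : ⟨c⟩]` to be odd. Then right multiplication by `c` is an odd
permutation of `H`: its cycles are the `[H : ⟨c⟩]` left cosets of `⟨c⟩`, each of even length. But
`c = ρ⁻¹ · ρ^τ` with `x ↦ x^τ` an automorphism of `H`, which makes that permutation even.
-/

open Equiv Equiv.Perm Subgroup

section RegularSign

variable {Γ : Type*} [Group Γ]

noncomputable def cosetDecomposition (Z : Subgroup Γ) : Γ ≃ (Γ ⧸ Z) × Z where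
  toFun x := (x, ⟨(Quotient.out (x : Γ ⧸ Z))⁻¹ * x, QuotientGroup.eq.mp (QuotientGroup.out_eq' _)⟩)
  invFun q := q.1.out * q.2
  left_inv x := mul_inv_cancel_left _ _
  right_inv := fun ⟨q, z⟩ => by
    have hq : ((q.out * z : Γ) : Γ ⧸ Z) = q := by
      rw [QuotientGroup.mk_mul_of_mem _ z.2, QuotientGroup.out_eq']
    ext
    · exact hq
    · simp [hq]

lemma cosetDecomposition_mul (Z : Subgroup Γ) (x : Γ) (z : Z) :
    cosetDecomposition Z (x * z) =
      ((cosetDecomposition Z x).1, (cosetDecomposition Z x).2 * z) := by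
  have hx : ((x * z : Γ) : Γ ⧸ Z) = x := QuotientGroup.mk_mul_of_mem _ z.2
  ext
  · exact hx
  · simp [cosetDecomposition, hx, mul_assoc]

lemma isCycle_mulRight_of_forall_mem_zpowers {g : Γ} (hg : ∀ x : Γ, x ∈ zpowers g)
    (h1 : g ≠ 1) : (Equiv.mulRight g).IsCycle := by
  refine ⟨1, by simpa using h1, fun y _ => ?_⟩
  obtain ⟨k, rfl⟩ := mem_zpowers_iff.mp (hg y)
  exact ⟨k, by simp⟩

variable [Fintype Γ] [DecidableEq Γ]

lemma sign_mulRight_mulEquiv_apply (α : Γ ≃* Γ) (x : Γ) :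
    sign (Equiv.mulRight (α x)) = sign (Equiv.mulRight x) := by
  have : Equiv.mulRight (α x) = (α.toEquiv.symm.trans (Equiv.mulRight x)).trans α.toEquiv := by
    ext a
    simp
  rw [this, sign_symm_trans_trans]

lemma sign_mulRight_inv_mul_mulEquiv_apply (α : Γ ≃* Γ) (x : Γ) :
    sign (Equiv.mulRight (x⁻¹ * α x)) = 1 := by
  rw [Equiv.mulRight_mul, Perm.sign_mul, sign_mulRight_mulEquiv_apply, ← Equiv.inv_mulRight,
    sign_inv, Int.units_mul_self]

lemma sign_mulRight_coe_eq_pow_index (Z : Subgroup Γ) [DecidablePred (· ∈ Z)] (z : Z) :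
    sign (Equiv.mulRight (z : Γ)) = sign (Equiv.mulRight z) ^ Z.index := by
  classical
  have hconj : ((cosetDecomposition Z).symm.trans (Equiv.mulRight (z : Γ))).trans
      (cosetDecomposition Z) = prodCongrRight fun _ => Equiv.mulRight z := by
    ext ⟨q, w⟩ <;> simp [cosetDecomposition_mul]
  rw [← sign_symm_trans_trans _ (cosetDecomposition Z), hconj, sign_prodCongrRight,
    Finset.prod_const, Finset.card_univ, index, Nat.card_eq_fintype_card]

lemma sign_mulRight_of_forall_mem_zpowers {g : Γ} (hg : ∀ x : Γ, x ∈ zpowers g) :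
    sign (Equiv.mulRight g) = -(-1) ^ Fintype.card Γ := by
  rcases eq_or_ne g 1 with rfl | h1
  · have : Fintype.card Γ = 1 :=
      Fintype.card_eq_one_iff.mpr ⟨1, fun y => by simpa using hg y⟩
    simp [this]
  · have hsupp : (Equiv.mulRight g).support = Finset.univ := by
      ext x
      simpa using h1
    rw [(isCycle_mulRight_of_forall_mem_zpowers hg h1).sign, hsupp, Finset.card_univ]

end RegularSign

lemma even_index_zpowers_inv_mul_mulEquiv_apply {Γ : Type*} [Group Γ] [Finite Γ]
    (α : Γ ≃* Γ) (x : Γ) (h : Even (orderOf (x⁻¹ * α x))) :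
    Even (zpowers (x⁻¹ * α x)).index := by
  classical
  have := Fintype.ofFinite Γ
  set y := x⁻¹ * α x
  have hgen : ∀ z : zpowers y, z ∈ zpowers (⟨y, mem_zpowers y⟩ : zpowers y) := by
    rintro ⟨z, hz⟩
    obtain ⟨k, rfl⟩ := mem_zpowers_iff.mp hz
    exact ⟨k, Subtype.ext (by simp)⟩
  have hsign := sign_mulRight_coe_eq_pow_index (zpowers y) ⟨y, mem_zpowers y⟩
  rw [sign_mulRight_inv_mul_mulEquiv_apply, sign_mulRight_of_forall_mem_zpowers hgen,
    ← Nat.card_eq_fintype_card, Nat.card_zpowers, h.neg_one_pow] at hsign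
  exact (neg_one_pow_eq_one_iff_even (by decide)).mp hsign.symm

section Involutions

variable {G : Type*} [Group G]

lemma Subgroup.card_sup_le_of_le_normalizer {H N : Subgroup G} (h : H ≤ normalizer (N : Set G)) :
    Nat.card ↥(H ⊔ N) ≤ Nat.card H * Nat.card N := by
  rw [← SetLike.coe_sort_coe, coe_mul_of_left_le_normalizer_right H N h]
  exact Set.natCard_mul_le

lemma card_closure_pair_le_two_mul_orderOf_mul [Finite G] {a b : G} (ha : a ^ 2 = 1)
    (hb : b ^ 2 = 1) : Nat.card (closure {a, b}) ≤ 2 * orderOf (a * b) := by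
  have ha' : a⁻¹ = a := inv_eq_of_mul_eq_one_right (by rwa [← sq])
  have hb' : b⁻¹ = b := inv_eq_of_mul_eq_one_right (by rwa [← sq])
  have hnorm : zpowers a ≤ normalizer (zpowers (a * b) : Set G) := by
    rw [zpowers_le, mem_normalizer_iff_map_conj_eq, MonoidHom.map_zpowers, ← zpowers_inv]
    congr 1
    simp [ha', hb', ← mul_assoc, ← sq, ha]
  have hle : closure {a, b} ≤ zpowers a ⊔ zpowers (a * b) := by
    rw [closure_le, Set.insert_subset_iff, Set.singleton_subset_iff]
    refine ⟨mem_sup_left (mem_zpowers a), ?_⟩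
    simpa using mul_mem (mem_sup_left (inv_mem (mem_zpowers a)))
      (mem_sup_right (mem_zpowers (a * b)) : a * b ∈ zpowers a ⊔ zpowers (a * b))
  calc Nat.card (closure {a, b}) ≤ Nat.card ↥(zpowers a ⊔ zpowers (a * b)) := card_le_of_le hle
    _ ≤ orderOf a * orderOf (a * b) := by
      simpa only [Nat.card_zpowers] using card_sup_le_of_le_normalizer hnorm
    _ ≤ 2 * orderOf (a * b) := Nat.mul_le_mul_right _ (orderOf_le_of_pow_eq_one two_pos ha)

lemma closure_commutator_pair_eq (ρ τ : G) :
    closure {ρ⁻¹ * τ⁻¹ * ρ * τ, ρ} = closure {ρ, τ⁻¹ * ρ * τ} := by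
  apply le_antisymm <;>
    rw [closure_le, Set.insert_subset_iff, Set.singleton_subset_iff] <;> refine ⟨?_, ?_⟩
  · simpa [mul_assoc] using mul_mem (inv_mem (subset_closure (.inl rfl)))
      (subset_closure (.inr rfl) : τ⁻¹ * ρ * τ ∈ closure {ρ, τ⁻¹ * ρ * τ})
  · exact subset_closure (.inl rfl)
  · exact subset_closure (.inr rfl)
  · simpa [mul_assoc] using mul_mem (subset_closure (.inr rfl))
      (subset_closure (.inl rfl) : ρ⁻¹ * τ⁻¹ * ρ * τ ∈ closure {ρ⁻¹ * τ⁻¹ * ρ * τ, ρ})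

lemma normal_closure_pair_conj {ρ τ : G} (hτ : τ ^ 2 = 1) (hgen : closure {ρ, τ} = ⊤) :
    (closure {ρ, τ⁻¹ * ρ * τ}).Normal := by
  have hτ' : τ⁻¹ = τ := inv_eq_of_mul_eq_one_right (by rwa [← sq])
  have hττ : ∀ x, τ * (τ * x) = x := fun x => by rw [← mul_assoc, ← sq, hτ, one_mul]
  rw [← normalizer_eq_top_iff, eq_top_iff, ← hgen, closure_le, Set.insert_subset_iff,
    Set.singleton_subset_iff]
  refine ⟨le_normalizer (subset_closure (.inl rfl)), ?_⟩
  rw [SetLike.mem_coe, mem_normalizer_iff_map_conj_eq, MonoidHom.map_closure, Set.image_pair,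
    Set.pair_comm]
  congr 3 <;> simp [hτ', mul_assoc, hττ, ← sq, hτ]

lemma index_closure_pair_conj_le_two [Finite G] {ρ τ : G} (hτ : τ ^ 2 = 1)
    (hgen : closure {ρ, τ} = ⊤) : (closure {ρ, τ⁻¹ * ρ * τ}).index ≤ 2 := by
  set N := closure {ρ, τ⁻¹ * ρ * τ}
  have := normal_closure_pair_conj hτ hgen
  have hsup : zpowers τ ⊔ N = ⊤ := by
    rw [eq_top_iff, ← hgen, closure_le, Set.insert_subset_iff, Set.singleton_subset_iff]
    exact ⟨mem_sup_right (subset_closure (.inl rfl)), mem_sup_left (mem_zpowers τ)⟩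
  have hcard := card_sup_le_of_le_normalizer
    (N.normalizer_eq_top ▸ le_top : zpowers τ ≤ normalizer (N : Set G))
  rw [hsup, card_top, Nat.card_zpowers, ← N.card_mul_index, mul_comm] at hcard
  exact Nat.le_of_mul_le_mul_right (hcard.trans (Nat.mul_le_mul_right _
    (orderOf_le_of_pow_eq_one two_pos hτ))) Nat.card_pos

lemma mul_conj_eq_inv_commutator {τ : G} (hτ : τ ^ 2 = 1) (ρ : G) :
    τ * (ρ⁻¹ * τ * ρ) = (ρ⁻¹ * τ⁻¹ * ρ * τ)⁻¹ := by
  simp [mul_assoc, inv_eq_of_mul_eq_one_right (by rwa [← sq] : τ * τ = 1)]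

lemma orderOf_commutator_dvd_card_closure_pair_conj {τ : G} (hτ : τ ^ 2 = 1) (ρ : G) :
    orderOf (ρ⁻¹ * τ⁻¹ * ρ * τ) ∣ Nat.card (closure {τ, ρ⁻¹ * τ * ρ}) := by
  rw [← orderOf_inv, ← mul_conj_eq_inv_commutator hτ]
  exact Subgroup.orderOf_dvd_natCard _
    (mul_mem (subset_closure (.inl rfl)) (subset_closure (.inr rfl)))

lemma card_closure_pair_conj_le_two_mul_orderOf_commutator [Finite G] {τ : G} (hτ : τ ^ 2 = 1)
    (ρ : G) : Nat.card (closure {τ, ρ⁻¹ * τ * ρ}) ≤ 2 * orderOf (ρ⁻¹ * τ⁻¹ * ρ * τ) := by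
  rw [← orderOf_inv, ← mul_conj_eq_inv_commutator hτ]
  refine card_closure_pair_le_two_mul_orderOf_mul hτ ?_
  simpa [hτ] using conj_pow (a := ρ⁻¹) (b := τ) (i := 2)

end Involutions

lemma even_and_odd_of_div_add_div_add_odd_eq_half {h a d m k q : ℕ} (hq : Odd q) (ha : a ∣ h)
    (hmk : h = m * k) (hmd : m ∣ d) (hdm : d ≤ 2 * m) (hd2 : 2 ∣ d) (hd : 0 < d)
    (hcount : 2 * h / a + 2 * h / d + q = 2 * h / 2) : Even m ∧ Odd k := by
  obtain ⟨j, rfl⟩ := hmd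
  have hm : 0 < m := Nat.pos_of_mul_pos_right hd
  have hj : j = 1 ∨ j = 2 := by
    have := Nat.le_of_mul_le_mul_left (by linarith : m * j ≤ m * 2) hm
    have := Nat.pos_of_mul_pos_left hd
    omega
  rw [Nat.mul_div_assoc 2 ha, Nat.mul_div_cancel_left _ two_pos, hmk] at hcount
  rcases hj with rfl | rfl
  · rw [mul_one, Nat.mul_left_comm, Nat.mul_div_cancel_left _ hm] at hcount
    have hodd : ¬Even (m * k) := by
      obtain ⟨s, rfl⟩ := hq
      rw [Nat.even_iff]
      omega
    exact absurd ((even_iff_two_dvd.mpr (by simpa using hd2)).mul_right k) hodd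
  · rw [Nat.mul_comm m 2, Nat.mul_div_mul_left _ _ two_pos, Nat.mul_div_cancel_left _ hm] at hcount
    have hpar : Even (m * k) ↔ Odd k := by
      obtain ⟨s, rfl⟩ := hq
      rw [Nat.even_iff, Nat.odd_iff]
      omega
    rw [Nat.even_mul] at hpar
    rcases Nat.even_or_odd k with hk | hk
    · exact absurd (hpar.mp (.inr hk)) (Nat.not_odd_iff_even.mpr hk)
    · exact ⟨(hpar.mpr hk).resolve_right (Nat.not_even_iff_odd.mpr hk), hk⟩

theorem stmt0_general {G : Type*} [Group G] [Finite G] {p : ℕ} (hodd : Odd p)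
    (ρ τ : G) (h : IsP0 p ρ τ) :
    Subgroup.closure {ρ⁻¹ * τ⁻¹ * ρ * τ, ρ} = ⊤ := by
  obtain ⟨hτ, hgen, n, -, hcount⟩ := h
  have hτ2 : τ ^ 2 = 1 := hτ ▸ pow_orderOf_eq_one τ
  by_contra hH
  set c := ρ⁻¹ * τ⁻¹ * ρ * τ
  set H := closure {c, ρ}
  have hHeq : H = closure {ρ, τ⁻¹ * ρ * τ} := closure_commutator_pair_eq ρ τ
  have : H.Normal := hHeq ▸ normal_closure_pair_conj hτ2 hgen
  have hindex : H.index = 2 := by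
    have := hHeq ▸ index_closure_pair_conj_le_two hτ2 hgen
    have := H.index_ne_zero_of_finite
    have := mt index_eq_one.mp hH
    omega
  have hρ : ρ ∈ H := subset_closure (.inr rfl)
  have hc : c ∈ H := subset_closure (.inl rfl)
  have hsign := even_index_zpowers_inv_mul_mulEquiv_apply (MulAut.conjNormal τ⁻¹) ⟨ρ, hρ⟩
  rw [show (⟨ρ, hρ⟩ : H)⁻¹ * MulAut.conjNormal τ⁻¹ ⟨ρ, hρ⟩ = ⟨c, hc⟩ from
    Subtype.ext (by simp [c, mul_assoc]), orderOf_mk] at hsign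
  obtain ⟨hm, hk⟩ := even_and_odd_of_div_add_div_add_odd_eq_half (hodd.pow (n := n))
    (H.orderOf_dvd_natCard hρ)
    (by rw [← (zpowers (⟨c, hc⟩ : H)).card_mul_index, Nat.card_zpowers, orderOf_mk])
    (orderOf_commutator_dvd_card_closure_pair_conj hτ2 ρ)
    (card_closure_pair_conj_le_two_mul_orderOf_commutator hτ2 ρ)
    (hτ ▸ Subgroup.orderOf_dvd_natCard _ (subset_closure (.inl rfl))) Nat.card_pos
    (by rwa [← H.card_mul_index, hindex, mul_comm] at hcount)
  exact Nat.not_even_iff_odd.mpr hk (hsign hm)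

/-- If `p` is an odd prime and the finite group `G` is a `𝒫₀(p)`-group with respect to
`(ρ, τ)`, then `G = ⟨[ρ,τ], ρ⟩`. -/
theorem stmt0 {G : Type*} [Group G] [Finite G] {p : ℕ} (hp : p.Prime) (hodd : Odd p)
    (ρ τ : G) (h : IsP0 p ρ τ) :
    Subgroup.closure {ρ⁻¹ * τ⁻¹ * ρ * τ, ρ} = ⊤ :=
  stmt0_general hodd ρ τ h
end

section
/- Let p be a prime. If a finite group G is a 𝒫₁(p)-group, then G is a 𝒫₂(p)-group. -/
/-!
Let `r ≠ p` be a prime. The `r`-part of `|G| = p ^ n * lcm |H₁| |H₂|` is the `r`-part of `|H₁|` or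
of `|H₂|`, so a Sylow `r`-subgroup of that `Hᵢ` is a Sylow `r`-subgroup of `G`; as Sylow subgroups
are conjugate, every Sylow `r`-subgroup of `G` is isomorphic to a subgroup of the cyclic or
dihedral group `Hᵢ`. Subgroups of cyclic groups are cyclic, and a subgroup `S` of `D_n` either
consists of rotations, hence is cyclic, or contains a reflection `t`; then `S = C ∪ tC` for its
cyclic rotation subgroup `C = ⟨c⟩`, and `r i ↦ c ^ i`, `sr i ↦ t * c ^ i` is an isomorphism
`D_{ord c} ≃* S`.
-/

open Pointwise

open Subgroup

section

variable {G : Type*} [Group G]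

theorem zpow_zmodCast_eq_zpow (c : G) {i : ZMod (orderOf c)} {k : ℤ}
    (h : (k : ZMod (orderOf c)) = i) : c ^ (i.cast : ℤ) = c ^ k := by
  rw [zpow_eq_zpow_iff_modEq, ← ZMod.intCast_eq_intCast_iff, ZMod.intCast_zmod_cast, h]

theorem zpow_zmodCast_injective (c : G) :
    Function.Injective fun i : ZMod (orderOf c) ↦ c ^ (i.cast : ℤ) := fun i j h ↦ by
  rwa [zpow_eq_zpow_iff_modEq, ← ZMod.intCast_eq_intCast_iff, ZMod.intCast_zmod_cast,
    ZMod.intCast_zmod_cast] at h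

theorem zpow_mul_eq_mul_zpow_neg {c t : G} (ht : t * t = 1) (htc : t * c * t = c⁻¹) (k : ℤ) :
    c ^ k * t = t * c ^ (-k) := by
  have ht' : t⁻¹ = t := inv_eq_of_mul_eq_one_right ht
  have hconj : t * c ^ k * t = c ^ (-k) :=
    calc t * c ^ k * t = (t * c * t⁻¹) ^ k := by rw [conj_zpow, ht']
      _ = c ^ (-k) := by rw [ht', htc, inv_zpow, zpow_neg]
  rw [← hconj, ← mul_assoc, ← mul_assoc, ht, one_mul]

end

namespace DihedralGroup

section Lift

variable {G : Type*} [Group G] {c t : G} (ht : t * t = 1) (htc : t * c * t = c⁻¹)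

/-- Exponents are read through `ZMod.cast : ZMod (orderOf c) → ℤ`; by `zpow_zmodCast_eq_zpow`
any integer representative gives the same power, also when `orderOf c = 0`. -/

noncomputable def lift : DihedralGroup (orderOf c) →* G where
  toFun
    | r i => c ^ (i.cast : ℤ)
    | sr i => t * c ^ (i.cast : ℤ)
  map_one' := by simp [one_def, -r_zero]
  map_mul' := by
    rintro (i | i) (j | j)
    · simp only [r_mul_r, ← zpow_add]
      exact zpow_zmodCast_eq_zpow c (by push_cast [ZMod.intCast_zmod_cast]; rfl)
    · simp only [r_mul_sr]
      rw [← mul_assoc, zpow_mul_eq_mul_zpow_neg ht htc, mul_assoc, ← zpow_add]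
      exact congrArg _ (zpow_zmodCast_eq_zpow c (by push_cast [ZMod.intCast_zmod_cast]; ring))
    · simp only [sr_mul_r, mul_assoc, ← zpow_add]
      exact congrArg _ (zpow_zmodCast_eq_zpow c (by push_cast [ZMod.intCast_zmod_cast]; rfl))
    · simp only [sr_mul_sr]
      rw [mul_assoc, ← mul_assoc (c ^ _), zpow_mul_eq_mul_zpow_neg ht htc, ← mul_assoc,
        ← mul_assoc, ht, one_mul, ← zpow_add]
      exact zpow_zmodCast_eq_zpow c (by push_cast [ZMod.intCast_zmod_cast]; ring)

theorem mem_range_lift {x : G} :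
    x ∈ (lift ht htc).range ↔ x ∈ zpowers c ∨ t * x ∈ zpowers c := by
  constructor
  · rintro ⟨i | i, rfl⟩
    · exact Or.inl (zpow_mem (mem_zpowers c) _)
    · refine Or.inr ?_
      show t * (t * c ^ (i.cast : ℤ)) ∈ zpowers c
      rw [← mul_assoc, ht, one_mul]
      exact zpow_mem (mem_zpowers c) _
  · rintro (hx | htx)
    · obtain ⟨k, rfl⟩ := mem_zpowers_iff.mp hx
      exact ⟨r k, zpow_zmodCast_eq_zpow c rfl⟩
    · obtain ⟨k, hk⟩ := mem_zpowers_iff.mp htx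
      refine ⟨sr k, ?_⟩
      show t * c ^ ((k : ZMod (orderOf c)).cast : ℤ) = x
      rw [zpow_zmodCast_eq_zpow c rfl, hk, ← mul_assoc, ht, one_mul]

theorem lift_injective (hmem : t ∉ zpowers c) : Function.Injective (lift ht htc) := by
  have hne : ∀ i j : ℤ, c ^ i ≠ t * c ^ j := fun i j h ↦
    hmem (mem_zpowers_iff.mpr ⟨i - j, by rw [zpow_sub, h, mul_inv_cancel_right]⟩)
  rintro (i | i) (j | j) h
  · exact congrArg r (zpow_zmodCast_injective c h)
  · exact absurd h (hne _ _)
  · exact absurd h.symm (hne _ _)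
  · exact congrArg sr (zpow_zmodCast_injective c (mul_left_cancel h))

include ht htc in
theorem nonempty_mulEquiv_of_mem_iff (hmem : t ∉ zpowers c) {S : Subgroup G}
    (hS : ∀ x, x ∈ S ↔ x ∈ zpowers c ∨ t * x ∈ zpowers c) :
    Nonempty (S ≃* DihedralGroup (orderOf c)) :=
  ⟨(MulEquiv.subgroupCongr (SetLike.ext fun x ↦ (hS x).trans (mem_range_lift ht htc).symm)).trans
    (MonoidHom.ofInjective (lift_injective ht htc hmem)).symm⟩

end Lift

variable {n : ℕ}

theorem r_mem_zpowers_r_one (i : ZMod n) : r i ∈ zpowers (r 1) :=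
  mem_zpowers_iff.mpr ⟨i.cast, by rw [r_one_zpow, ZMod.intCast_zmod_cast]⟩

theorem sr_notMem_zpowers_r_one (i : ZMod n) : sr i ∉ zpowers (r 1) := by
  intro h
  obtain ⟨k, hk⟩ := mem_zpowers_iff.mp h
  rw [r_one_zpow] at hk
  cases hk

theorem isCyclicOrDihedral_subgroup [NeZero n] (S : Subgroup (DihedralGroup n)) :
    IsCyclicOrDihedral S := by
  by_cases hSR : S ≤ zpowers (r 1)
  · exact Or.inl (Subgroup.isCyclic_of_le hSR)
  obtain ⟨x, hxS, hxR⟩ := SetLike.not_le_iff_exists.mp hSR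
  obtain ⟨j, rfl⟩ : ∃ j, x = sr j := by
    rcases x with i | j
    · exact absurd (r_mem_zpowers_r_one i) hxR
    · exact ⟨j, rfl⟩
  obtain ⟨g, hg⟩ := (S ⊓ zpowers (r 1)).isCyclic_iff_exists_zpowers_eq_top.mp
    (Subgroup.isCyclic_of_le inf_le_right)
  obtain ⟨d, rfl⟩ : ∃ d, g = r d := by
    rcases g with d | d
    · exact ⟨d, rfl⟩
    · exact absurd (mem_inf.mp (hg ▸ mem_zpowers _)).2 (sr_notMem_zpowers_r_one d)
  have hle : zpowers (r d) ≤ zpowers (r 1) := zpowers_le.mpr (r_mem_zpowers_r_one d)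
  have hnot : ∀ i, sr i ∉ zpowers (r d) := fun i h ↦ sr_notMem_zpowers_r_one i (hle h)
  have hrot : ∀ i, r i ∈ S ↔ r i ∈ zpowers (r d) := fun i ↦ by
    rw [hg, mem_inf, and_iff_left (r_mem_zpowers_r_one i)]
  refine Or.inr ⟨orderOf (r d), orderOf_pos _,
    nonempty_mulEquiv_of_mem_iff (sr_mul_self j) ?_ (hnot j) fun x ↦ ?_⟩
  · rw [sr_mul_r, sr_mul_sr, inv_r, sub_add_cancel_left]
  · rcases x with i | i
    · rw [sr_mul_r, hrot, or_iff_left (hnot _)]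
    · rw [or_iff_right (hnot i), sr_mul_sr, ← hrot, ← mul_mem_cancel_left hxS, sr_mul_sr]

end DihedralGroup

theorem IsCyclicOrDihedral.of_mulEquiv {A B : Type*} [Group A] [Group B] (e : A ≃* B)
    (h : IsCyclicOrDihedral A) : IsCyclicOrDihedral B := by
  rcases h with h | ⟨n, hn, ⟨f⟩⟩
  · exact Or.inl (e.isCyclic.mp h)
  · exact Or.inr ⟨n, hn, ⟨e.symm.trans f⟩⟩

theorem IsCyclicOrDihedral.subgroup {H : Type*} [Group H] (hH : IsCyclicOrDihedral H)
    (S : Subgroup H) : IsCyclicOrDihedral S := by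
  rcases hH with hH | ⟨n, hn, ⟨e⟩⟩
  · exact Or.inl inferInstance
  · have : NeZero n := ⟨hn.ne'⟩
    exact (DihedralGroup.isCyclicOrDihedral_subgroup (S.map e.toMonoidHom)).of_mulEquiv
      (S.equivMapOfInjective _ e.injective).symm

theorem Sylow.exists_subgroup_mulEquiv_of_factorization_eq {G : Type*} [Group G] [Finite G]
    {r : ℕ} [Fact r.Prime] {H : Subgroup G}
    (hH : (Nat.card H).factorization r = (Nat.card G).factorization r) (S : Sylow r G) :
    ∃ T : Subgroup H, Nonempty (T ≃* S) := by
  obtain ⟨T⟩ : Nonempty (Sylow r H) := inferInstance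
  let e := (T : Subgroup H).equivMapOfInjective _ H.subtype_injective
  let P := Sylow.ofCard ((T : Subgroup H).map H.subtype)
    (by rw [← Nat.card_congr e.toEquiv, T.card_eq_multiplicity, hH])
  exact ⟨T, ⟨e.trans (Sylow.equiv P S)⟩⟩

theorem Nat.factorization_prime_pow_mul_lcm {p r n a b : ℕ} (hp : p.Prime) (hrp : r ≠ p)
    (ha : a ≠ 0) (hb : b ≠ 0) :
    (p ^ n * a.lcm b).factorization r = max (a.factorization r) (b.factorization r) := by
  rw [Nat.factorization_mul (pow_ne_zero n hp.ne_zero) (Nat.lcm_ne_zero ha hb),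
    Nat.factorization_lcm ha hb, hp.factorization_pow, Finsupp.add_apply,
    Finsupp.single_eq_of_ne hrp, zero_add, Finsupp.sup_apply]

/-- If a finite group `G` is a `𝒫₁(p)`-group, then it is a `𝒫₂(p)`-group. -/
theorem stmt2 {G : Type*} [Group G] [Finite G] {p : ℕ} (hp : p.Prime)
    (h : IsP1 p G) : IsP2 p G := by
  obtain ⟨H₁, H₂, h₁, h₂, n, hcard⟩ := h
  intro r hr hrp S
  have : Fact r.Prime := ⟨hr⟩
  have hmax := congrArg (Nat.factorization · r) hcard
  rw [Nat.factorization_prime_pow_mul_lcm hp hrp Nat.card_pos.ne' Nat.card_pos.ne'] at hmax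
  obtain ⟨H, hH, hfac⟩ : ∃ H : Subgroup G,
      IsCyclicOrDihedral H ∧ (Nat.card H).factorization r = (Nat.card G).factorization r := by
    rcases max_choice ((Nat.card H₁).factorization r) ((Nat.card H₂).factorization r) with hm | hm
    · exact ⟨H₁, h₁, by rw [hmax, hm]⟩
    · exact ⟨H₂, h₂, by rw [hmax, hm]⟩
  obtain ⟨T, ⟨e⟩⟩ := S.exists_subgroup_mulEquiv_of_factorization_eq hfac
  exact (hH.subgroup T).of_mulEquiv e
end

section
/- Let p be a prime, let G be a finite group that is a 𝒫₁(p)-group with respect to subgroups H₁ and H₂, and let N be a normal subgroup of G. Then N is a 𝒫₁(p)-group with respect to the subgroups H₁ ∩ N and H₂ ∩ N. -/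
open Pointwise

theorem dihedral_of {H : Type*} [Group H] [Finite H] (a b : H) (hb : b * b = 1)
    (hab : b * a * b = a⁻¹) (hbz : b ∉ Subgroup.zpowers a)
    (hcl : Subgroup.closure {a, b} = ⊤) :
    Nonempty (H ≃* DihedralGroup (orderOf a)) := by
  set m := orderOf a with hm
  have hm0 : 0 < m := orderOf_pos a
  haveI : NeZero m := ⟨hm0.ne'⟩
  set g : ZMod m → H := fun i => a ^ i.val with hgdef
  have hg_add : ∀ i j : ZMod m, g (i + j) = g i * g j := by
    intro i j
    simp only [hgdef, ZMod.val_add, hm]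
    rw [pow_mod_orderOf, pow_add]
  have hc : ∀ i j : ZMod m, Commute (g i) (g j) := fun i j => (Commute.refl a).pow_pow _ _
  have hg_sub : ∀ i j : ZMod m, g (j - i) = (g i)⁻¹ * g j := by
    intro i j
    have h1 := hg_add (j - i) i
    rw [sub_add_cancel] at h1
    rw [eq_mul_inv_of_mul_eq h1.symm]
    exact ((hc i j).inv_left.eq).symm
  have hinv : b⁻¹ = b := inv_eq_of_mul_eq_one_left hb
  have hba : b * a = a⁻¹ * b := by
    have h3 : b * a * b * b = a⁻¹ * b := by rw [hab]
    rwa [mul_assoc, hb, mul_one] at h3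
  have hbg : ∀ i : ZMod m, b * g i = (g i)⁻¹ * b := by
    intro i
    show b * a ^ i.val = (a ^ i.val)⁻¹ * b
    induction i.val with
    | zero => simp
    | succ k ih =>
      rw [pow_succ, ← mul_assoc, ih, mul_assoc, hba, ← mul_assoc, mul_inv_rev]
      group
  have hgb : ∀ i : ZMod m, g i * b = b * (g i)⁻¹ := by
    intro i
    have h2 : b * g i * b = (g i)⁻¹ := by rw [hbg, mul_assoc, hb, mul_one]
    rw [← h2, ← mul_assoc, ← mul_assoc, hb, one_mul]
  let f0 : DihedralGroup m → H := fun x => match x with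
    | .r i => g i
    | .sr i => b * g i
  have hmul : ∀ x y : DihedralGroup m, f0 (x * y) = f0 x * f0 y := by
    rintro (i | i) (j | j)
    · exact hg_add i j
    · show b * g (j - i) = g i * (b * g j)
      rw [hg_sub, ← mul_assoc (g i) b (g j), hgb i, mul_assoc]
    · show b * g (i + j) = b * g i * g j
      rw [hg_add, mul_assoc]
    · show g (j - i) = b * g i * (b * g j)
      rw [mul_assoc b (g i), ← mul_assoc (g i) b (g j), hgb i,
        ← mul_assoc b (b * (g i)⁻¹) (g j), ← mul_assoc b b, hb, one_mul, hg_sub]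
  let f : DihedralGroup m →* H := MonoidHom.mk' f0 hmul
  have hga : g 1 = a := by
    have h1 : (1 : ZMod m) = ((1 : ℕ) : ZMod m) := by norm_cast
    show a ^ (1 : ZMod m).val = a
    rw [h1, ZMod.val_natCast, hm, pow_mod_orderOf, pow_one]
  have hsurj : Function.Surjective f := by
    rw [← MonoidHom.range_eq_top, eq_top_iff, ← hcl, Subgroup.closure_le]
    rintro x (hx | hx)
    · exact ⟨DihedralGroup.r 1, show g 1 = x from hga.trans hx.symm⟩
    · refine ⟨DihedralGroup.sr 0, show b * g 0 = x from ?_⟩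
      rw [hx]
      show b * a ^ (0 : ZMod m).val = b
      simp
  have hcard : Nat.card H = 2 * m := by
    have hle : Nat.card H ≤ 2 * m := by
      have := Nat.card_le_card_of_surjective f hsurj
      rwa [DihedralGroup.nat_card] at this
    have hz : Nat.card (Subgroup.zpowers a) = m := Nat.card_zpowers a
    have hidx : (Subgroup.zpowers a).index * Nat.card (Subgroup.zpowers a) = Nat.card H :=
      Subgroup.index_mul_card _
    rw [hz] at hidx
    have h2 : 2 ≤ (Subgroup.zpowers a).index := by
      rcases Nat.lt_or_ge (Subgroup.zpowers a).index 2 with h | h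
      · interval_cases hi : (Subgroup.zpowers a).index
        · exact absurd hi Subgroup.index_ne_zero_of_finite
        · exact absurd (Subgroup.index_eq_one.mp hi ▸ Subgroup.mem_top b) hbz
      · exact h
    have hge : 2 * m ≤ Nat.card H := hidx ▸ Nat.mul_le_mul_right m h2
    omega
  have hbij : Function.Bijective f :=
    (Nat.bijective_iff_surjective_and_card f).mpr ⟨hsurj, by rw [DihedralGroup.nat_card, hcard]⟩
  exact ⟨(MulEquiv.ofBijective f hbij).symm⟩
theorem isCyclic_zpowers {G : Type*} [Group G] (g : G) : IsCyclic (Subgroup.zpowers g) :=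
  ⟨⟨⟨g, Subgroup.mem_zpowers g⟩, fun x => by
    obtain ⟨k, hk⟩ := x.2
    exact ⟨k, Subtype.ext (by simpa using hk)⟩⟩⟩

open DihedralGroup in
theorem r_inv {n : ℕ} (i : ZMod n) : (r i : DihedralGroup n)⁻¹ = r (-i) :=
  inv_eq_of_mul_eq_one_right (by rw [r_mul_r, add_neg_cancel, one_def])

open DihedralGroup in
theorem mem_zpowers_r_one {n : ℕ} [NeZero n] (x : DihedralGroup n) :
    x ∈ Subgroup.zpowers (r 1 : DihedralGroup n) ↔ ∃ i, x = r i := by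
  rw [Subgroup.mem_zpowers_iff]
  constructor
  · rintro ⟨k, rfl⟩
    cases k with
    | ofNat m => exact ⟨(m : ZMod n), by rw [Int.ofNat_eq_coe, zpow_natCast, r_one_pow]⟩
    | negSucc m =>
      refine ⟨(-(m+1) : ZMod n), ?_⟩
      rw [zpow_negSucc, r_one_pow, r_inv]
      norm_cast
  · rintro ⟨i, rfl⟩
    refine ⟨(i.val : ℤ), ?_⟩
    rw [zpow_natCast, r_one_pow, ZMod.natCast_val, ZMod.cast_id]

theorem isCyclicOrDihedral_subgroup_dihedral {n : ℕ} (hn : 0 < n)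
    (K : Subgroup (DihedralGroup n)) : IsCyclicOrDihedral K := by
  haveI : NeZero n := ⟨hn.ne'⟩
  set R := Subgroup.zpowers (DihedralGroup.r 1 : DihedralGroup n) with hR
  haveI : IsCyclic R := isCyclic_zpowers _
  by_cases hKR : K ≤ R
  · exact Or.inl (Subgroup.isCyclic_of_le hKR)
  · right
    obtain ⟨x, hxK, hxR⟩ := SetLike.not_le_iff_exists.mp hKR
    obtain ⟨j, rfl⟩ : ∃ j, x = DihedralGroup.sr j := by
      cases x with
      | r i => exact absurd ((mem_zpowers_r_one _).mpr ⟨i, rfl⟩) hxR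
      | sr j => exact ⟨j, rfl⟩
    haveI : IsCyclic (K ⊓ R : Subgroup (DihedralGroup n)) :=
      Subgroup.isCyclic_of_le inf_le_right
    obtain ⟨g, hg⟩ := IsCyclic.exists_generator (α := (K ⊓ R : Subgroup (DihedralGroup n)))
    set a : DihedralGroup n := (g : DihedralGroup n) with ha
    have haK : a ∈ K := g.2.1
    have haR : a ∈ R := g.2.2
    have hbK : DihedralGroup.sr j ∈ K := hxK
    set a' : K := ⟨a, haK⟩ with ha'
    set b' : K := ⟨DihedralGroup.sr j, hbK⟩ with hb'
    have hb2 : b' * b' = 1 := Subtype.ext (DihedralGroup.sr_mul_self j)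
    obtain ⟨i, hi⟩ : ∃ i, a = DihedralGroup.r i := (mem_zpowers_r_one a).mp haR
    have hconj : b' * a' * b' = a'⁻¹ := by
      apply Subtype.ext
      show DihedralGroup.sr j * a * DihedralGroup.sr j = a⁻¹
      rw [hi, DihedralGroup.sr_mul_r, DihedralGroup.sr_mul_sr, r_inv]
      congr 1
      ring
    have hbz : b' ∉ Subgroup.zpowers a' := by
      intro hmem
      apply hxR
      have h1 : (DihedralGroup.sr j : DihedralGroup n) ∈ Subgroup.zpowers a := by
        obtain ⟨k, hk⟩ := Subgroup.mem_zpowers_iff.mp hmem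
        exact Subgroup.mem_zpowers_iff.mpr ⟨k, congrArg Subtype.val hk⟩
      exact (Subgroup.zpowers_le.mpr haR) h1
    have key : ∀ z : K, (z : DihedralGroup n) ∈ R → z ∈ Subgroup.closure {a', b'} := by
      intro z hzR
      have hz : (z : DihedralGroup n) ∈ K ⊓ R := ⟨z.2, hzR⟩
      obtain ⟨k, hk⟩ := Subgroup.mem_zpowers_iff.mp (hg ⟨(z : DihedralGroup n), hz⟩)
      have hcoe : a ^ k = (z : DihedralGroup n) := congrArg Subtype.val hk
      have : a' ^ k = z := Subtype.ext (by push_cast; exact hcoe)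
      rw [← this]
      exact Subgroup.zpow_mem _ (Subgroup.subset_closure (by simp)) k
    have hcl : Subgroup.closure {a', b'} = ⊤ := by
      rw [eq_top_iff]
      intro y _
      have : (∃ i, (y : DihedralGroup n) = DihedralGroup.r i) ∨
          ∃ i, (y : DihedralGroup n) = DihedralGroup.sr i := by
        cases hy : (y : DihedralGroup n) with
        | r i => exact Or.inl ⟨i, rfl⟩
        | sr i => exact Or.inr ⟨i, rfl⟩
      rcases this with ⟨i, hy⟩ | ⟨i, hy⟩
      · exact key y ((mem_zpowers_r_one _).mpr ⟨i, hy⟩)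
      · have hyb : ((y * b' : K) : DihedralGroup n) ∈ R := by
          push_cast
          rw [hy, DihedralGroup.sr_mul_sr]
          exact (mem_zpowers_r_one _).mpr ⟨_, rfl⟩
        have h1 : y * b' ∈ Subgroup.closure {a', b'} := key _ hyb
        have h2 : b' ∈ Subgroup.closure {a', b'} := Subgroup.subset_closure (by simp)
        have h3 := mul_mem h1 (inv_mem h2)
        rwa [mul_assoc, mul_inv_cancel, mul_one] at h3
    obtain ⟨e⟩ := dihedral_of a' b' hb2 hconj hbz hcl
    exact ⟨orderOf a', orderOf_pos a', ⟨e⟩⟩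


theorem sylow_key {G : Type*} [Group G] [Finite G] {q : ℕ} (hq : q.Prime) (H N : Subgroup G)
    (hN : N.Normal) (hfac : (Nat.card G).factorization q ≤ (Nat.card H).factorization q) :
    (Nat.card N).factorization q ≤ (Nat.card (H ⊓ N : Subgroup G)).factorization q := by
  haveI : Fact q.Prime := ⟨hq⟩
  obtain ⟨P⟩ : Nonempty (Sylow q H) := inferInstance
  set P' := (P : Subgroup H).map H.subtype with hP'
  have hcard_eq : (Nat.card H).factorization q = (Nat.card G).factorization q := by
    refine le_antisymm ?_ hfac
    have hdvd : Nat.card H ∣ Nat.card G := Subgroup.card_subgroup_dvd_card H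
    exact (Nat.factorization_le_iff_dvd Nat.card_pos.ne' Nat.card_pos.ne').mpr hdvd q
  have hP'card : Nat.card P' = q ^ (Nat.card G).factorization q := by
    have h1 : Nat.card P' = Nat.card P :=
      (Nat.card_congr (Subgroup.equivMapOfInjective _ _ (Subgroup.subtype_injective H)).toEquiv).symm
    rw [h1, Sylow.card_eq_multiplicity, hcard_eq]
  let Q : Sylow q G := Sylow.ofCard P' hP'card
  have hQH : (Q : Subgroup G) ≤ H := Subgroup.map_subtype_le _
  obtain ⟨T⟩ : Nonempty (Sylow q N) := inferInstance
  set T' := (T : Subgroup N).map N.subtype with hT'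
  have hT'card : Nat.card T' = q ^ (Nat.card N).factorization q := by
    have h1 : Nat.card T' = Nat.card T :=
      (Nat.card_congr (Subgroup.equivMapOfInjective _ _ (Subgroup.subtype_injective N)).toEquiv).symm
    rw [h1, Sylow.card_eq_multiplicity]
  have hT'p : IsPGroup q T' := T.2.map _
  obtain ⟨Q', hTQ'⟩ := hT'p.exists_le_sylow
  obtain ⟨g, hg⟩ := MulAction.exists_smul_eq G Q Q'
  have hQ'H : (Q' : Subgroup G) ≤ MulAut.conj g • H := by
    rw [← hg, Sylow.coe_subgroup_smul]
    exact Subgroup.pointwise_smul_le_pointwise_smul_iff.mpr hQH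
  have hT'HN : T' ≤ MulAut.conj g • (H ⊓ N) := by
    intro x hx
    have hxN : x ∈ N := Subgroup.map_subtype_le _ hx
    have hxH : x ∈ MulAut.conj g • H := hQ'H (hTQ' hx)
    rw [Subgroup.mem_pointwise_smul_iff_inv_smul_mem] at hxH ⊢
    refine ⟨hxH, ?_⟩
    show (MulAut.conj g)⁻¹ • x ∈ N
    have hrw : (MulAut.conj g)⁻¹ • x = g⁻¹ * x * (g⁻¹)⁻¹ := by
      rw [inv_inv]; exact MulAut.conj_inv_apply g x
    rw [hrw]
    exact hN.conj_mem x hxN g⁻¹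
  have hdvd : Nat.card T' ∣ Nat.card (H ⊓ N : Subgroup G) := by
    have h2 := Subgroup.card_dvd_of_le hT'HN
    rwa [(Nat.card_congr (Subgroup.equivSMul (MulAut.conj g) (H ⊓ N)).toEquiv).symm] at h2
  rw [hT'card] at hdvd
  exact (Nat.Prime.pow_dvd_iff_le_factorization hq Nat.card_pos.ne').mp hdvd

theorem IsCyclicOrDihedral.congr {H H' : Type*} [Group H] [Group H'] (e : H ≃* H')
    (h : IsCyclicOrDihedral H) : IsCyclicOrDihedral H' := by
  rcases h with h | ⟨n, hn, ⟨f⟩⟩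
  · exact Or.inl (isCyclic_of_surjective e e.surjective)
  · exact Or.inr ⟨n, hn, ⟨e.symm.trans f⟩⟩

theorem isCyclicOrDihedral_subgroup {H : Type*} [Group H] [Finite H]
    (h : IsCyclicOrDihedral H) (K : Subgroup H) : IsCyclicOrDihedral K := by
  rcases h with h | ⟨n, hn, ⟨f⟩⟩
  · exact Or.inl (Subgroup.isCyclic K)
  · have e : K ≃* (K.map f.toMonoidHom : Subgroup (DihedralGroup n)) :=
      Subgroup.equivMapOfInjective K f.toMonoidHom f.injective
    exact (isCyclicOrDihedral_subgroup_dihedral hn (K.map f.toMonoidHom)).congr e.symm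

/-- If the finite group `G` is a `𝒫₁(p)`-group with respect to `H₁` and `H₂`, and `N` is a
normal subgroup of `G`, then `N` is a `𝒫₁(p)`-group with respect to `H₁ ∩ N` and `H₂ ∩ N`. -/
theorem stmt3 {G : Type*} [Group G] [Finite G] {p : ℕ} (hp : p.Prime)
    (H₁ H₂ N : Subgroup G) (hN : N.Normal) (h : IsP1With p H₁ H₂) :
    IsP1With p ((H₁ ⊓ N).subgroupOf N) ((H₂ ⊓ N).subgroupOf N) := by
  obtain ⟨hcd1, hcd2, n, hcard⟩ := h
  have e₁ : ((H₁ ⊓ N).subgroupOf N) ≃* (H₁ ⊓ N : Subgroup G) :=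
    Subgroup.subgroupOfEquivOfLe inf_le_right
  have e₂ : ((H₂ ⊓ N).subgroupOf N) ≃* (H₂ ⊓ N : Subgroup G) :=
    Subgroup.subgroupOfEquivOfLe inf_le_right
  have e₁' : ((H₁ ⊓ N).subgroupOf H₁) ≃* (H₁ ⊓ N : Subgroup G) :=
    Subgroup.subgroupOfEquivOfLe inf_le_left
  have e₂' : ((H₂ ⊓ N).subgroupOf H₂) ≃* (H₂ ⊓ N : Subgroup G) :=
    Subgroup.subgroupOfEquivOfLe inf_le_left
  refine ⟨(isCyclicOrDihedral_subgroup hcd1 _).congr (e₁'.trans e₁.symm),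
    (isCyclicOrDihedral_subgroup hcd2 _).congr (e₂'.trans e₂.symm), ?_⟩
  have hac : Nat.card ((H₁ ⊓ N).subgroupOf N) = Nat.card (H₁ ⊓ N : Subgroup G) :=
    Nat.card_congr e₁.toEquiv
  have hbc : Nat.card ((H₂ ⊓ N).subgroupOf N) = Nat.card (H₂ ⊓ N : Subgroup G) :=
    Nat.card_congr e₂.toEquiv
  rw [hac, hbc]
  set a := Nat.card (H₁ ⊓ N : Subgroup G) with ha
  set b := Nat.card (H₂ ⊓ N : Subgroup G) with hb
  set c := Nat.card N with hc
  set L := Nat.lcm a b with hL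
  have ha0 : a ≠ 0 := Nat.card_pos.ne'
  have hb0 : b ≠ 0 := Nat.card_pos.ne'
  have hc0 : c ≠ 0 := Nat.card_pos.ne'
  have hL0 : L ≠ 0 := Nat.lcm_ne_zero ha0 hb0
  have hLc : L ∣ c :=
    Nat.lcm_dvd (Subgroup.card_dvd_of_le inf_le_right) (Subgroup.card_dvd_of_le inf_le_right)
  set k := c / L with hk
  have hck : c = L * k := (Nat.mul_div_cancel' hLc).symm
  have hk0 : k ≠ 0 := by
    intro h0
    rw [h0, mul_zero] at hck
    exact hc0 hck
  have hH10 : Nat.card H₁ ≠ 0 := Nat.card_pos.ne'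
  have hH20 : Nat.card H₂ ≠ 0 := Nat.card_pos.ne'
  have key : ∀ q : ℕ, q.Prime → q ≠ p → c.factorization q ≤ L.factorization q := by
    intro q hq hqp
    have hGfac : (Nat.card G).factorization q =
        max ((Nat.card H₁).factorization q) ((Nat.card H₂).factorization q) := by
      rw [hcard, Nat.factorization_mul (pow_ne_zero n hp.pos.ne')
        (Nat.lcm_ne_zero hH10 hH20), Finsupp.add_apply,
        Nat.factorization_lcm hH10 hH20, Finsupp.sup_apply]
      have hpn : ((p ^ n).factorization) q = 0 := by
        rw [hp.factorization_pow, Finsupp.single_apply, if_neg (fun h => hqp h.symm)]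
      rw [hpn, zero_add]
    rw [hL, Nat.factorization_lcm ha0 hb0, Finsupp.sup_apply]
    rcases le_total ((Nat.card H₂).factorization q) ((Nat.card H₁).factorization q) with hle | hle
    · have hfac : (Nat.card G).factorization q ≤ (Nat.card H₁).factorization q := by
        rw [hGfac]; exact max_le le_rfl hle
      exact le_sup_of_le_left (sylow_key hq H₁ N hN hfac)
    · have hfac : (Nat.card G).factorization q ≤ (Nat.card H₂).factorization q := by
        rw [hGfac]; exact max_le hle le_rfl
      exact le_sup_of_le_right (sylow_key hq H₂ N hN hfac)
  have hkfact : ∀ {q : ℕ}, q.Prime → q ∣ k → q = p := by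
    intro q hq hqk
    by_contra hqp
    have h1 : k.factorization q = 0 := by
      rw [hk, Nat.factorization_div hLc, Finsupp.tsub_apply]
      exact Nat.sub_eq_zero_of_le (key q hq hqp)
    have h2 := (hq.dvd_iff_one_le_factorization hk0).mp hqk
    omega
  obtain ⟨m, hm⟩ : ∃ m, k = p ^ m := ⟨_, Nat.eq_prime_pow_of_unique_prime_dvd hk0 hkfact⟩
  exact ⟨m, by rw [hck, hm, mul_comm]⟩
end

section
/- Let G be a finite group generated by elements x and y such that the cyclic subgroup ⟨x⟩ is normal in G, ⟨x⟩ = ⟨[x,y]⟩ (the subgroup generated by the commutator [x,y] = x⁻¹y⁻¹xy), and gcd(|x|,|y|) = 1. Then for every integer i the element xⁱy has order |y|. In particular, if |y| = 2 then y⁻¹xy = x⁻¹. -/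
open Pointwise

/-- Let `G = ⟨x, y⟩` be a finite group in which `⟨x⟩` is normal, `⟨x⟩ = ⟨[x,y]⟩` and
`gcd(|x|, |y|) = 1`.  Then `xⁱy` has order `|y|` for every integer `i`; in particular, if
`|y| = 2` then `y⁻¹xy = x⁻¹`. -/
theorem stmt7 {G : Type*} [Group G] [Finite G] (x y : G)
    (hgen : Subgroup.closure {x, y} = ⊤)
    (hnorm : (Subgroup.zpowers x).Normal)
    (hcomm : Subgroup.zpowers x = Subgroup.zpowers (x⁻¹ * y⁻¹ * x * y))
    (hcop : Nat.Coprime (orderOf x) (orderOf y)) :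
    (∀ i : ℤ, orderOf (x ^ i * y) = orderOf y) ∧
      (orderOf y = 2 → y⁻¹ * x * y = x⁻¹) := by
  classical
  set m := orderOf x with hm
  set n := orderOf y with hn
  have hyn : y ^ n = 1 := by rw [hn]; exact pow_orderOf_eq_one y
  have hxy : y⁻¹ * x * y ∈ Subgroup.zpowers x := by
    have := hnorm.conj_mem x (Subgroup.mem_zpowers x) y⁻¹
    simpa [mul_assoc] using this
  obtain ⟨k, hk⟩ := Subgroup.mem_zpowers_iff.mp hxy
  -- commutator equals x^(k-1)
  have hc : x⁻¹ * y⁻¹ * x * y = x ^ (k - 1) := by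
    have h1 : x⁻¹ * y⁻¹ * x * y = x⁻¹ * (y⁻¹ * x * y) := by group
    rw [h1, ← hk, sub_eq_neg_add, zpow_add, zpow_neg_one]
  have h2 : Subgroup.zpowers x = Subgroup.zpowers (x ^ (k - 1)) := by rw [hcomm, hc]
  obtain ⟨j, hj⟩ := Subgroup.mem_zpowers_iff.mp (h2 ▸ Subgroup.mem_zpowers x)
  have hdvd1 : (m : ℤ) ∣ (k - 1) * j - 1 := by
    rw [orderOf_dvd_iff_zpow_eq_one, zpow_sub, zpow_mul, hj, zpow_one, mul_inv_cancel]
  -- basic swap relation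
  have hb : ∀ b : ℤ, x ^ b * y = y * x ^ (b * k) := by
    intro b
    have h3 : y⁻¹ * x ^ b * y = (y⁻¹ * x * y) ^ b := by
      rw [show y⁻¹ * x * y = y⁻¹ * x * y⁻¹⁻¹ by rw [inv_inv], conj_zpow, inv_inv]
    have h4 : y⁻¹ * x ^ b * y = x ^ (b * k) := by
      rw [h3, ← hk, ← zpow_mul, mul_comm]
    calc x ^ b * y = y * (y⁻¹ * x ^ b * y) := by group
      _ = y * x ^ (b * k) := by rw [h4]
  have hswap : ∀ (s : ℕ) (a : ℤ), x ^ a * y ^ s = y ^ s * x ^ (a * k ^ s) := by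
    intro s
    induction s with
    | zero => intro a; simp
    | succ s ih =>
      intro a
      calc x ^ a * y ^ (s + 1) = (x ^ a * y ^ s) * y := by rw [pow_succ, mul_assoc]
        _ = y ^ s * (x ^ (a * k ^ s) * y) := by rw [ih, mul_assoc]
        _ = y ^ s * (y * x ^ (a * k ^ s * k)) := by rw [hb]
        _ = y ^ (s + 1) * x ^ (a * k ^ (s + 1)) := by
            rw [pow_succ, pow_succ, mul_assoc, mul_assoc]
  -- m divides k^n - 1
  have hkn : (m : ℤ) ∣ k ^ n - 1 := by
    have h5 := hswap n 1
    rw [hyn, zpow_one, one_mul, mul_one, one_mul] at h5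
    rw [orderOf_dvd_iff_zpow_eq_one, zpow_sub, ← h5, zpow_one, mul_inv_cancel]
  -- m divides the geometric sum
  have hS : (m : ℤ) ∣ ∑ u ∈ Finset.range n, k ^ u := by
    have h6 : (m : ℤ) ∣ (∑ u ∈ Finset.range n, k ^ u) * (k - 1) := by
      rw [geom_sum_mul]; exact hkn
    have h7 : (∑ u ∈ Finset.range n, k ^ u)
        = (∑ u ∈ Finset.range n, k ^ u) * (k - 1) * j
          - ((k - 1) * j - 1) * (∑ u ∈ Finset.range n, k ^ u) := by ring
    rw [h7]
    exact dvd_sub (h6.mul_right j) (hdvd1.mul_right _)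
  -- main power formula
  have hmain : ∀ (i : ℤ) (t : ℕ),
      (x ^ i * y) ^ t = y ^ t * x ^ (i * (k * ∑ u ∈ Finset.range t, k ^ u)) := by
    intro i t
    induction t with
    | zero => simp
    | succ t ih =>
      have he : (i * (k * ∑ u ∈ Finset.range t, k ^ u) + i) * k
          = i * (k * ∑ u ∈ Finset.range (t + 1), k ^ u) := by
        rw [geom_sum_succ]; ring
      calc (x ^ i * y) ^ (t + 1) = (x ^ i * y) ^ t * (x ^ i * y) := by rw [pow_succ]
        _ = y ^ t * (x ^ (i * (k * ∑ u ∈ Finset.range t, k ^ u)) * x ^ i) * y := by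
            rw [ih]; group
        _ = y ^ t * x ^ (i * (k * ∑ u ∈ Finset.range t, k ^ u) + i) * y := by
            rw [← zpow_add]
        _ = y ^ t * (y * x ^ ((i * (k * ∑ u ∈ Finset.range t, k ^ u) + i) * k)) := by
            rw [mul_assoc, hb]
        _ = y ^ (t + 1) * x ^ (i * (k * ∑ u ∈ Finset.range (t + 1), k ^ u)) := by
            rw [he, pow_succ, mul_assoc]
  have hx1 : ∀ c : ℤ, (m : ℤ) ∣ c → x ^ c = 1 := fun c hc' =>
    orderOf_dvd_iff_zpow_eq_one.mp hc'
  constructor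
  · intro i
    have hpow : (x ^ i * y) ^ n = 1 := by
      rw [hmain i n]
      have h8 : x ^ (i * (k * ∑ u ∈ Finset.range n, k ^ u)) = 1 :=
        hx1 _ (Dvd.dvd.mul_left hS (i * k) |>.trans (dvd_of_eq (by ring)))
      rw [h8, mul_one, hyn]
    set d := orderOf (x ^ i * y) with hd
    have hd1 : d ∣ n := orderOf_dvd_of_pow_eq_one hpow
    have hdp : (x ^ i * y) ^ d = 1 := pow_orderOf_eq_one _
    rw [hmain i d] at hdp
    set c : ℤ := i * (k * ∑ u ∈ Finset.range d, k ^ u) with hcdef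
    have hyd : y ^ d = x ^ (-c) := by
      rw [zpow_neg, eq_inv_iff_mul_eq_one]; exact hdp
    have hydm : (y ^ d) ^ m = 1 := by
      rw [hyd, ← zpow_natCast, ← zpow_mul, mul_comm, zpow_mul, zpow_natCast,
        pow_orderOf_eq_one, one_zpow]
    have hydn : (y ^ d) ^ n = 1 := by
      rw [← pow_mul, mul_comm, pow_mul, hyn, one_pow]
    have ho : orderOf (y ^ d) ∣ Nat.gcd m n :=
      Nat.dvd_gcd (orderOf_dvd_of_pow_eq_one hydm) (orderOf_dvd_of_pow_eq_one hydn)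
    rw [Nat.Coprime] at hcop
    rw [hcop] at ho
    have hyd1 : y ^ d = 1 := orderOf_eq_one_iff.mp (Nat.eq_one_of_dvd_one ho ▸ rfl)
    have hnd : n ∣ d := orderOf_dvd_of_pow_eq_one hyd1
    exact Nat.dvd_antisymm hd1 hnd
  · intro h2'
    have hk2 : (m : ℤ) ∣ k ^ 2 - 1 := by rw [← h2']; exact hkn
    obtain ⟨c', hc'⟩ := hdvd1
    have hcopr : IsCoprime (m : ℤ) (k - 1) := ⟨-c', j, by linear_combination hc'⟩
    have hk1 : (m : ℤ) ∣ k + 1 := by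
      refine hcopr.dvd_of_dvd_mul_left ?_
      have : k ^ 2 - 1 = (k - 1) * (k + 1) := by ring
      rw [← this]; exact hk2
    have hxk1 : x ^ (k + 1) = 1 := hx1 _ hk1
    rw [← hk]
    calc x ^ k = x ^ (k + 1) * x⁻¹ := by rw [zpow_add_one, mul_assoc, mul_inv_cancel, mul_one]
      _ = x⁻¹ := by rw [hxk1, one_mul]
end

section
/- Let p be a prime and let G be a finite non-abelian solvable group that is a 𝒫₂⁺(p)-group with respect to some pair, in which every normal p-subgroup is trivial. Let H be a Hall {2,3}-subgroup of G, let K be a Hall {2,3}'-subgroup of G which is normal in G, and let a, b ∈ K satisfy ⟨a⟩ = [K,H] = [⟨a⟩,H], ⟨b⟩ = C_K(H), K = ⟨a⟩⟨b⟩ with ⟨a⟩ ∩ ⟨b⟩ = 1, and gcd(|a|,|b|) = 1 (so G = ⟨a⟩:(⟨b⟩ × H)). Let ρ₀, τ₀ ∈ H with ⟨ρ₀,τ₀⟩ = H, τ₀ of order 2, and τ₀⁻¹aτ₀ = a⁻¹, and let i, j be integers with gcd(i,|a|) = gcd(j,|b|) = 1. Let a′ be a generator of the centralizer C_{⟨a⟩}(⟨bρ₀⟩).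 Then the order of aⁱbʲρ₀ equals |a′|·|b|·|ρ₀|, and the order of the commutator [aⁱbʲρ₀, τ₀] equals |a|·|[ρ₀,τ₀]|. -/
open Pointwise

/-!
`⟨a⟩ = [K, H]` is normalized by `K` and by `H`, which generate `G` since their indices are
coprime; so `⟨a⟩` is normal. As `Aut ⟨a⟩` is abelian, every commutator centralizes `a`.

Commutator: with `d = bʲρ₀` and `τ₀` inverting `a` and commuting with `b`,
`[aⁱd, τ₀] = (d⁻¹a⁻²ⁱd) · [ρ₀, τ₀]`, a product of commuting elements of coprime orders `|a|`
and `|[ρ₀, τ₀]|`.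

Order: write `x = aⁱc` with `c = bʲρ₀` of order `n = |b||ρ₀|` and `c a c⁻¹ = aˢ`. Then
`xⁿ = N(a)ⁱ` for the norm `N(a) = a^(1 + s + ⋯ + sⁿ⁻¹) = (ac)ⁿ`, and `n ∣ |x|` because the image
of `x` in `G/⟨a⟩` has order `n`; hence `|x| = n · |N(a)|`. Now `N(a)` centralizes `c`, while on
an element `a' ∈ C_{⟨a⟩}(c)` the norm is `a'ⁿ`, which has the same order as `a'`. Thus
`⟨N(a)⟩ = C_{⟨a⟩}(c)`, and `C(c) = C(bρ₀)` because `⟨bʲρ₀⟩ = ⟨bρ₀⟩`.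
-/

open scoped commutatorElement
open Subgroup Finset

theorem Nat.Coprime.two_pow_mul_three_pow {m : ℕ} (h : m.Coprime 6) (u v : ℕ) :
    m.Coprime (2 ^ u * 3 ^ v) :=
  ((h.coprime_dvd_right (by norm_num)).pow_right u).mul_right
    ((h.coprime_dvd_right (by norm_num)).pow_right v)

theorem orderOf_eq_mul_orderOf_pow_of_dvd {G : Type*} [Group G] {x : G} {n : ℕ}
    (h : n ∣ orderOf x) : orderOf x = n * orderOf (x ^ n) := by
  rcases eq_or_ne n 0 with rfl | hn
  · simpa using h
  · rw [orderOf_pow_of_dvd hn h, Nat.mul_div_cancel' h]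

theorem Subgroup.commutator_normal_of_sup_eq_top {G : Type*} [Group G] {H₁ H₂ : Subgroup G}
    (h : H₁ ⊔ H₂ = ⊤) : ⁅H₁, H₂⁆.Normal :=
  normalizer_eq_top_iff.mp <| top_unique <|
    h ▸ sup_le (normalizer_commutator_ge_left H₁ H₂) (normalizer_commutator_ge_right H₁ H₂)

theorem Subgroup.mem_centralizer_zpowers_iff {G : Type*} [Group G] {x y : G} :
    x ∈ centralizer (zpowers y : Set G) ↔ Commute x y := by
  rw [zpowers_eq_closure, centralizer_closure, mem_centralizer_singleton_iff]
  exact Iff.rfl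

theorem Commute.zpowers_pow_mul_eq {G : Type*} [Group G] {x y : G} (h : Commute x y)
    (hcop : (orderOf x).Coprime (orderOf y)) {j : ℕ} (hj : j.gcd (orderOf x) = 1) :
    zpowers (x ^ j * y) = zpowers (x * y) := by
  obtain ⟨k, hkx, hky⟩ := Nat.chineseRemainder hcop j 1
  have hk : (x * y) ^ k = x ^ j * y := by
    rw [h.mul_pow, pow_eq_pow_iff_modEq.mpr hkx, pow_eq_pow_iff_modEq.mpr hky, pow_one]
  have hkcop : k.gcd (orderOf (x * y)) = 1 := by
    rw [h.orderOf_mul_eq_mul_orderOf_of_coprime hcop]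
    exact Nat.Coprime.mul_right ((Nat.ModEq.gcd_eq hkx).trans hj)
      ((Nat.ModEq.gcd_eq hky).trans (Nat.gcd_one_left _))
  rw [← hk]
  exact le_antisymm (zpowers_le.mpr (pow_mem (mem_zpowers _) _))
    (zpowers_le.mpr (mem_zpowers_pow_iff.mpr hkcop))

theorem commutator_mul_left_eq_of_commute {G : Type*} [Group G] {y ρ τ : G}
    (h : Commute y τ) : (y * ρ)⁻¹ * τ⁻¹ * (y * ρ) * τ = ρ⁻¹ * τ⁻¹ * ρ * τ := by
  calc (y * ρ)⁻¹ * τ⁻¹ * (y * ρ) * τ = ρ⁻¹ * y⁻¹ * (τ⁻¹ * y) * ρ * τ := by group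
    _ = ρ⁻¹ * τ⁻¹ * ρ * τ := by rw [h.inv_right.symm.eq]; group

section CyclicNormal

variable {G : Type*} [Group G] {a c : G} {s : ℤ}

theorem conj_zpow_eq_zpow_mul (hs : c * a * c⁻¹ = a ^ s) (k : ℤ) :
    c * a ^ k * c⁻¹ = a ^ (s * k) := by
  rw [← conj_zpow, hs, ← zpow_mul]

theorem conj_pow_eq_zpow_pow (hs : c * a * c⁻¹ = a ^ s) (m : ℕ) :
    c ^ m * a * (c ^ m)⁻¹ = a ^ s ^ m := by
  induction m with
  | zero => simp
  | succ m ih =>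
    calc c ^ (m + 1) * a * (c ^ (m + 1))⁻¹ = c ^ m * (c * a * c⁻¹) * (c ^ m)⁻¹ := by group
      _ = a ^ s ^ (m + 1) := by
        rw [hs, conj_zpow_eq_zpow_mul ih, pow_succ]

theorem zpow_mul_pow_eq (hs : c * a * c⁻¹ = a ^ s) (e : ℤ) (m : ℕ) :
    (a ^ e * c) ^ m = a ^ (e * ∑ t ∈ range m, s ^ t) * c ^ m := by
  induction m with
  | zero => simp
  | succ m ih =>
    calc (a ^ e * c) ^ (m + 1)
        = a ^ (e * ∑ t ∈ range m, s ^ t) * (c ^ m * a ^ e * (c ^ m)⁻¹) * c ^ (m + 1) := by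
          rw [pow_succ, ih]; group
      _ = a ^ (e * ∑ t ∈ range (m + 1), s ^ t) * c ^ (m + 1) := by
          rw [conj_zpow_eq_zpow_mul (conj_pow_eq_zpow_pow hs m), ← zpow_add, sum_range_succ,
            mul_add, mul_comm (s ^ m)]

theorem zpow_mul_geomSum_eq_pow (hs : c * a * c⁻¹ = a ^ s) {w : ℤ} (hw : Commute (a ^ w) c)
    (m : ℕ) : a ^ (w * ∑ t ∈ range m, s ^ t) = (a ^ w) ^ m := by
  simpa [hw.mul_pow] using (zpow_mul_pow_eq hs w m).symm

theorem orderOf_zpow_geomSum (hs : c * a * c⁻¹ = a ^ s) (hcop : (orderOf a).Coprime (orderOf c))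
    {a' : G} (ha' : zpowers a' = zpowers a ⊓ centralizer (zpowers c : Set G)) :
    orderOf (a ^ ∑ t ∈ range (orderOf c), s ^ t) = orderOf a' := by
  set N := a ^ ∑ t ∈ range (orderOf c), s ^ t
  have hN : (a * c) ^ orderOf c = N := by
    simpa [pow_orderOf_eq_one] using zpow_mul_pow_eq hs 1 (orderOf c)
  have hNc : Commute N c := by
    have hNac : Commute N (a * c) := hN ▸ (Commute.self_pow _ _).symm
    have hNa : Commute N a := ((Commute.refl a).zpow_left _)
    simpa using hNa.inv_right.mul_right hNac
  have ha'mem := ha'.le (mem_zpowers a')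
  obtain ⟨w, rfl⟩ := mem_zpowers_iff.mp ha'mem.1
  refine Nat.dvd_antisymm (orderOf_dvd_of_mem_zpowers ?_) ?_
  · rw [ha']
    exact ⟨zpow_mem (mem_zpowers a) _, mem_centralizer_zpowers_iff.mpr hNc⟩
  · have hw : Commute (a ^ w) c := mem_centralizer_zpowers_iff.mp ha'mem.2
    have hcop' : (orderOf (a ^ w)).Coprime (orderOf c) :=
      hcop.coprime_dvd_left (orderOf_dvd_of_mem_zpowers ha'mem.1)
    rw [← hcop'.orderOf_pow, ← zpow_mul_geomSum_eq_pow hs hw, mul_comm, zpow_mul]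
    exact orderOf_dvd_of_mem_zpowers (zpow_mem (mem_zpowers N) w)

theorem orderOf_dvd_orderOf_mul_of_mem_zpowers (hcop : (orderOf a).Coprime (orderOf c)) {z : G}
    [(zpowers a).Normal] (hz : z ∈ zpowers a) : orderOf c ∣ orderOf (z * c) := by
  let π := QuotientGroup.mk' (zpowers a)
  have hπz : π z = 1 := (QuotientGroup.eq_one_iff z).mpr hz
  have hπ : π (z * c) = π c := by rw [map_mul, hπz, one_mul]
  refine (orderOf_dvd_of_pow_eq_one ?_).trans (hπ ▸ orderOf_map_dvd π (z * c))
  have hmem : c ^ orderOf (π c) ∈ zpowers a := by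
    rw [← QuotientGroup.eq_one_iff, QuotientGroup.mk'_apply, QuotientGroup.mk_pow]
    exact pow_orderOf_eq_one (π c)
  exact orderOf_eq_one_iff.mp <| Nat.eq_one_of_dvd_coprimes hcop
    (orderOf_dvd_of_mem_zpowers hmem) (orderOf_pow_dvd _)

theorem orderOf_pow_mul_of_normal [hA : (zpowers a).Normal]
    (hcop : (orderOf a).Coprime (orderOf c)) {a' : G}
    (ha' : zpowers a' = zpowers a ⊓ centralizer (zpowers c : Set G)) {i : ℕ}
    (hi : i.gcd (orderOf a) = 1) : orderOf (a ^ i * c) = orderOf a' * orderOf c := by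
  obtain ⟨s, hs⟩ := mem_zpowers_iff.mp (hA.conj_mem a (mem_zpowers a) c)
  set N := a ^ ∑ t ∈ range (orderOf c), s ^ t
  have hpow : (a ^ i * c) ^ orderOf c = N ^ i := by
    rw [← zpow_natCast a i, zpow_mul_pow_eq hs.symm, pow_orderOf_eq_one, mul_one, mul_comm,
      zpow_mul, zpow_natCast]
  have hNi : orderOf (N ^ i) = orderOf N :=
    Nat.Coprime.orderOf_pow <| (Nat.coprime_comm.mp hi).coprime_dvd_left
      (orderOf_dvd_of_mem_zpowers (zpow_mem (mem_zpowers a) _))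
  rw [orderOf_eq_mul_orderOf_pow_of_dvd (orderOf_dvd_orderOf_mul_of_mem_zpowers hcop
      (pow_mem (mem_zpowers a) i)), hpow, hNi, orderOf_zpow_geomSum hs.symm hcop ha', mul_comm]

theorem conj_conj_comm_of_mem_zpowers [hA : (zpowers a).Normal] (x y : G) {z : G}
    (hz : z ∈ zpowers a) : x * (y * z * y⁻¹) * x⁻¹ = y * (x * z * x⁻¹) * y⁻¹ := by
  obtain ⟨s, hs⟩ := mem_zpowers_iff.mp (hA.conj_mem a (mem_zpowers a) x)
  obtain ⟨t, ht⟩ := mem_zpowers_iff.mp (hA.conj_mem a (mem_zpowers a) y)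
  obtain ⟨k, rfl⟩ := mem_zpowers_iff.mp hz
  rw [conj_zpow_eq_zpow_mul ht.symm, conj_zpow_eq_zpow_mul hs.symm,
    conj_zpow_eq_zpow_mul hs.symm, conj_zpow_eq_zpow_mul ht.symm, mul_left_comm]

theorem commute_commutatorElement_of_normal [hA : (zpowers a).Normal] (g h : G) :
    Commute a ⁅g, h⁆ := by
  have hz : h⁻¹ * a * h ∈ zpowers a := by simpa using hA.conj_mem a (mem_zpowers a) h⁻¹
  have key := conj_conj_comm_of_mem_zpowers h g⁻¹ hz
  simp only [inv_inv] at key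
  calc a * ⁅g, h⁆ = g * (h * (g⁻¹ * (h⁻¹ * a * h) * g) * h⁻¹) * g⁻¹ * ⁅g, h⁆ := by
        rw [key]; group
    _ = ⁅g, h⁆ * a := by rw [commutatorElement_def]; group

theorem orderOf_commutator_pow_mul_of_conj_eq_inv [hA : (zpowers a).Normal] {τ d : G}
    (hτ : τ⁻¹ * a * τ = a⁻¹) (h2 : (orderOf a).Coprime 2) {i : ℕ} (hi : i.gcd (orderOf a) = 1)
    (hcop : (orderOf a).Coprime (orderOf (d⁻¹ * τ⁻¹ * d * τ))) :
    orderOf ((a ^ i * d)⁻¹ * τ⁻¹ * (a ^ i * d) * τ) =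
      orderOf a * orderOf (d⁻¹ * τ⁻¹ * d * τ) := by
  set w := d⁻¹ * (a ^ (2 * i))⁻¹ * d
  have hτi : τ⁻¹ * a ^ i * τ = (a ^ i)⁻¹ := by
    simpa [hτ] using (conj_pow (i := i) (a := τ⁻¹) (b := a)).symm
  have hsplit : (a ^ i * d)⁻¹ * τ⁻¹ * (a ^ i * d) * τ = w * (d⁻¹ * τ⁻¹ * d * τ) := by
    calc (a ^ i * d)⁻¹ * τ⁻¹ * (a ^ i * d) * τ
        = d⁻¹ * (a ^ i)⁻¹ * (τ⁻¹ * a ^ i * τ) * τ⁻¹ * d * τ := by group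
      _ = w * (d⁻¹ * τ⁻¹ * d * τ) := by rw [hτi]; simp only [w, two_mul, pow_add]; group
  have hwA : w ∈ zpowers a := by
    simpa using hA.conj_mem _ (inv_mem (pow_mem (mem_zpowers a) (2 * i))) d⁻¹
  have hw : orderOf w = orderOf a := by
    have := (MulAut.conj d⁻¹).orderOf_eq (a ^ (2 * i))⁻¹
    rw [MulAut.conj_apply, inv_inv] at this
    rw [this, orderOf_inv]
    exact Nat.Coprime.orderOf_pow (h2.mul_right (Nat.coprime_comm.mp hi))
  have hcomm : Commute w (d⁻¹ * τ⁻¹ * d * τ) := by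
    obtain ⟨k, hk⟩ := mem_zpowers_iff.mp hwA
    rw [← hk]
    simpa [commutatorElement_def] using (commute_commutatorElement_of_normal d⁻¹ τ⁻¹).zpow_left k
  rw [hsplit, hcomm.orderOf_mul_eq_mul_orderOf_of_coprime (hw ▸ hcop), hw]

end CyclicNormal

namespace IsHall23'

variable {G : Type*} [Group G] {K H : Subgroup G}

theorem sup_eq_top (hK : IsHall23' K) (hH : IsHall23 H) : K ⊔ H = ⊤ := by
  obtain ⟨u, v, hKi⟩ := hK.2
  have hcop : K.index.Coprime H.index := hKi ▸ (hH.2.two_pow_mul_three_pow u v).symm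
  rw [← index_eq_one, ← Nat.dvd_one, ← hcop.gcd_eq_one]
  exact Nat.dvd_gcd (index_dvd_of_le le_sup_left) (index_dvd_of_le le_sup_right)

theorem coprime_orderOf (hK : IsHall23' K) (hH : IsHall23 H) {k g : G} (hk : k ∈ K)
    (hg : g ∈ H) : (orderOf k).Coprime (orderOf g) := by
  obtain ⟨u, v, hHcard⟩ := hH.1
  exact ((hK.1.coprime_dvd_left (K.orderOf_dvd_natCard hk)).two_pow_mul_three_pow u v)
    |>.coprime_dvd_right (hHcard ▸ H.orderOf_dvd_natCard hg)

end IsHall23'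

theorem stmt14_general {G : Type*} [Group G]
    (K H : Subgroup G) (hK : IsHall23' K) (hH : IsHall23 H)
    (a b : G) (ha : a ∈ K)
    (haKH : ⁅K, H⁆ = Subgroup.zpowers a)
    (hbC : K ⊓ Subgroup.centralizer (H : Set G) = Subgroup.zpowers b)
    (hcop : Nat.Coprime (orderOf a) (orderOf b))
    (ρ₀ τ₀ : G) (hρ₀ : ρ₀ ∈ H) (hτ₀ : τ₀ ∈ H)
    (hτ₀2 : orderOf τ₀ = 2)
    (hinv : τ₀⁻¹ * a * τ₀ = a⁻¹)
    (i j : ℕ) (hi : Nat.gcd i (orderOf a) = 1) (hj : Nat.gcd j (orderOf b) = 1)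
    (a' : G)
    (ha' : Subgroup.zpowers a' =
      Subgroup.zpowers a ⊓ Subgroup.centralizer (Subgroup.zpowers (b * ρ₀) : Set G)) :
    orderOf (a ^ i * b ^ j * ρ₀) = orderOf a' * (orderOf b * orderOf ρ₀) ∧
      orderOf ((a ^ i * b ^ j * ρ₀)⁻¹ * τ₀⁻¹ * (a ^ i * b ^ j * ρ₀) * τ₀) =
        orderOf a * orderOf (ρ₀⁻¹ * τ₀⁻¹ * ρ₀ * τ₀) := by
  have hA : (zpowers a).Normal := haKH ▸ commutator_normal_of_sup_eq_top (hK.sup_eq_top hH)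
  have hb : b ∈ K ⊓ centralizer (H : Set G) := hbC ▸ mem_zpowers b
  have hbH : ∀ g ∈ H, Commute b g := fun g hg ↦ (mem_centralizer_iff.mp hb.2 g hg).symm
  have hbρ₀ : (orderOf b).Coprime (orderOf ρ₀) := hK.coprime_orderOf hH hb.1 hρ₀
  have hbj : orderOf (b ^ j) = orderOf b := Nat.Coprime.orderOf_pow (Nat.coprime_comm.mp hj)
  have hc : orderOf (b ^ j * ρ₀) = orderOf b * orderOf ρ₀ := by
    rw [((hbH ρ₀ hρ₀).pow_left j).orderOf_mul_eq_mul_orderOf_of_coprime (hbj ▸ hbρ₀), hbj]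
  rw [mul_assoc (a ^ i)]
  constructor
  · rw [← hc]
    refine orderOf_pow_mul_of_normal (hc ▸ hcop.mul_right (hK.coprime_orderOf hH ha hρ₀)) ?_ hi
    rwa [(hbH ρ₀ hρ₀).zpowers_pow_mul_eq hbρ₀ hj]
  · have hcomm := commutator_mul_left_eq_of_commute (ρ := ρ₀) ((hbH τ₀ hτ₀).pow_left j)
    have hρτ : ρ₀⁻¹ * τ₀⁻¹ * ρ₀ * τ₀ ∈ H :=
      H.mul_mem (H.mul_mem (H.mul_mem (H.inv_mem hρ₀) (H.inv_mem hτ₀)) hρ₀) hτ₀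
    rw [← hcomm] at hρτ ⊢
    exact orderOf_commutator_pow_mul_of_conj_eq_inv hinv (hτ₀2 ▸ hK.coprime_orderOf hH ha hτ₀) hi
      (hK.coprime_orderOf hH ha hρτ)

/-- With the standard decomposition `G = ⟨a⟩:(⟨b⟩ × H)` of a finite non-abelian solvable
`𝒫₂⁺(p)`-group (with respect to some pair) with trivial normal `p`-subgroups: if
`⟨ρ₀, τ₀⟩ = H`, `|τ₀| = 2`, `τ₀⁻¹aτ₀ = a⁻¹`, `gcd(i,|a|) = gcd(j,|b|) = 1`, and `a′`
generates `C_{⟨a⟩}(⟨bρ₀⟩)`, then `|aⁱbʲρ₀| = |a′|·|b|·|ρ₀|` and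
`|[aⁱbʲρ₀, τ₀]| = |a|·|[ρ₀, τ₀]|`. -/
theorem stmt14 {G : Type*} [Group G] [Finite G] {p : ℕ} (hp : p.Prime)
    (hna : ¬ ∀ x y : G, x * y = y * x) (hsolv : IsSolvable G)
    (h : ∃ ρ₁ τ₁ : G, IsP2Plus p ρ₁ τ₁)
    (hOp : ∀ N : Subgroup G, N.Normal → IsPGroup p N → N = ⊥)
    (K H : Subgroup G) (hK : IsHall23' K) (hH : IsHall23 H) (hKn : K.Normal)
    (a b : G) (ha : a ∈ K) (hb : b ∈ K)
    (haKH : ⁅K, H⁆ = Subgroup.zpowers a)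
    (haH : ⁅Subgroup.zpowers a, H⁆ = Subgroup.zpowers a)
    (hbC : K ⊓ Subgroup.centralizer (H : Set G) = Subgroup.zpowers b)
    (hKab : (K : Set G) = (Subgroup.zpowers a : Set G) * (Subgroup.zpowers b : Set G))
    (hab : Subgroup.zpowers a ⊓ Subgroup.zpowers b = ⊥)
    (hcop : Nat.Coprime (orderOf a) (orderOf b))
    (ρ₀ τ₀ : G) (hρ₀ : ρ₀ ∈ H) (hτ₀ : τ₀ ∈ H)
    (hgen : Subgroup.closure {ρ₀, τ₀} = H) (hτ₀2 : orderOf τ₀ = 2)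
    (hinv : τ₀⁻¹ * a * τ₀ = a⁻¹)
    (i j : ℕ) (hi : Nat.gcd i (orderOf a) = 1) (hj : Nat.gcd j (orderOf b) = 1)
    (a' : G)
    (ha' : Subgroup.zpowers a' =
      Subgroup.zpowers a ⊓ Subgroup.centralizer (Subgroup.zpowers (b * ρ₀) : Set G)) :
    orderOf (a ^ i * b ^ j * ρ₀) = orderOf a' * (orderOf b * orderOf ρ₀) ∧
      orderOf ((a ^ i * b ^ j * ρ₀)⁻¹ * τ₀⁻¹ * (a ^ i * b ^ j * ρ₀) * τ₀) =
        orderOf a * orderOf (ρ₀⁻¹ * τ₀⁻¹ * ρ₀ * τ₀) :=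
  stmt14_general K H hK hH a b ha haKH hbC hcop ρ₀ τ₀ hρ₀ hτ₀ hτ₀2 hinv i j hi hj a' ha'
end
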